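/- arXiv:2003.11181 — 2 statements merged into one kernel-verified Lean document; each statement's English description precedes it below -/
import Mathlib

section
/- Let (U, Z) be a random vector in ℝ^{m_u} × ℝ^{m_z} with joint Lebesgue density f₀, let Y be a real random variable whose conditional density given (U, Z) = (u, z) with respect to Lebesgue measure is p(y | u, z), and let R ∈ {0,1} satisfy Assumption A2 with E[R | Y, U, Z] = π(Y, U) almost surely for a measurable function π with values in [0, 1]. Let a : ℝ × ℝ^{m_u} × ℝ^{m_z} → ℝ^p be measurable with ∫∫∫ ‖a(y,u,z)‖ p(y|u,z) f₀(u,z) dy du dz < ∞, and define A(y, u) = ∫ a(y, u, ζ) p(y | u, ζ) f₀(u, ζ) dζ / ∫ p(y | u, ζ) f₀(u, ζ) dζ wherever the denominator is positive and finite (which holds almost everywhere under the law of (Y, U)). Then E[R · (a(Y, U, Z) − A(Y, U))] = 0. In particular, taking a = ∇_β log p(· | ·, ·; β₀), the first-order derivative h(β₀, F₀) of the pseudolikelihood of Zhao and Shao (2015) has expectation zero at the true parameter. -/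
/-!
Under Assumption A2, conditioning on `(Y, U, Z)` replaces `R` by `π(Y, U)`, so
`E[R (a − A)] = ∫ π(y, u) (a(y, u, ζ) − A(y, u)) p(y | u, ζ) f₀(u, ζ) d(y, u, ζ)`.
Since `π(y, u)` does not depend on `ζ`, integrate over `ζ` first: for each `(y, u)` the inner
integral `∫ (a(y, u, ζ) − A(y, u)) p(y | u, ζ) f₀(u, ζ) dζ` vanishes because `A(y, u)` is
precisely the `p f₀`-weighted average of `a(y, u, ·)`.
-/

open MeasureTheory ProbabilityTheory

noncomputable section

section WeightedAverage

variable {W E : Type*} [MeasurableSpace W] [NormedAddCommGroup E] [NormedSpace ℝ E]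

def weightedAverage (ν : Measure W) (d : W → ℝ) (a : W → E) : E :=
  (∫ w, d w ∂ν)⁻¹ • ∫ w, d w • a w ∂ν

variable {ν : Measure W} {d : W → ℝ} {a : W → E}

theorem integral_smul_sub_weightedAverage [CompleteSpace E] (hd : 0 ≤ᵐ[ν] d)
    (hdi : Integrable d ν) (hda : Integrable (fun w => d w • a w) ν) :
    ∫ w, d w • (a w - weightedAverage ν d a) ∂ν = 0 := by
  simp only [smul_sub]
  rw [integral_sub hda (hdi.smul_const _), integral_smul_const, weightedAverage, smul_smul]
  by_cases h0 : ∫ w, d w ∂ν = 0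
  · -- the average is the junk value `0`, but then `d = 0` a.e. and `∫ d • a` vanishes too
    have hd0 : d =ᵐ[ν] 0 := (integral_eq_zero_iff_of_nonneg_ae hd hdi).1 h0
    rw [h0, zero_mul, zero_smul, sub_zero]
    exact integral_eq_zero_of_ae (hd0.mono fun w hw => by simp [hw])
  · rw [mul_inv_cancel₀ h0, one_smul, sub_self]

theorem norm_weightedAverage_mul_integral_le (hd : 0 ≤ᵐ[ν] d) :
    ‖weightedAverage ν d a‖ * ∫ w, d w ∂ν ≤ ∫ w, ‖d w • a w‖ ∂ν := by
  have hD : 0 ≤ ∫ w, d w ∂ν := integral_nonneg_of_ae hd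
  rw [weightedAverage, norm_smul, Real.norm_of_nonneg (inv_nonneg.2 hD)]
  rcases hD.eq_or_lt with h0 | hpos
  · rw [← h0, mul_zero]
    exact integral_nonneg fun w => norm_nonneg _
  · rw [mul_right_comm, inv_mul_cancel₀ hpos.ne', one_mul]
    exact norm_integral_le_integral_norm _

end WeightedAverage

section FiberAverage

variable {X W E : Type*} [MeasurableSpace X] [MeasurableSpace W]
  [NormedAddCommGroup E] [NormedSpace ℝ E]
  {μ : Measure X} {ν : Measure W} {d : X × W → ℝ} {a : X × W → E}

def fiberAverage (ν : Measure W) (d : X × W → ℝ) (a : X × W → E) (x : X) : E :=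
  weightedAverage ν (fun w => d (x, w)) (fun w => a (x, w))

variable [SFinite ν]

theorem stronglyMeasurable_fiberAverage (hdm : StronglyMeasurable d)
    (ham : StronglyMeasurable a) : StronglyMeasurable (fiberAverage ν d a) :=
  hdm.integral_prod_right'.measurable.inv.stronglyMeasurable.smul
    (hdm.smul ham).integral_prod_right'

variable [SFinite μ]

theorem integrable_smul_fiberAverage (hd : ∀ z, 0 ≤ d z) (hdm : StronglyMeasurable d)
    (ham : StronglyMeasurable a) (hdi : Integrable d (μ.prod ν))
    (hda : Integrable (fun z => d z • a z) (μ.prod ν)) :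
    Integrable (fun z => d z • fiberAverage ν d a z.1) (μ.prod ν) := by
  have hm : StronglyMeasurable fun z : X × W => d z • fiberAverage ν d a z.1 :=
    hdm.smul ((stronglyMeasurable_fiberAverage hdm ham).comp_measurable measurable_fst)
  rw [integrable_prod_iff hm.aestronglyMeasurable]
  refine ⟨hdi.prod_right_ae.mono fun x hx => hx.smul_const (fiberAverage ν d a x), ?_⟩
  refine hda.integral_norm_prod_left.mono' hm.norm.integral_prod_right'.aestronglyMeasurable
    (ae_of_all _ fun x => ?_)
  have hdx : ∀ w, 0 ≤ d (x, w) := fun w => hd _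
  have hbound := norm_weightedAverage_mul_integral_le (ν := ν) (a := fun w => a (x, w))
    (ae_of_all _ hdx)
  simp only [norm_smul, Real.norm_of_nonneg (hdx _), integral_mul_const] at hbound ⊢
  rwa [Real.norm_of_nonneg (mul_nonneg (integral_nonneg hdx) (norm_nonneg _)), mul_comm]

theorem integrable_smul_sub_fiberAverage (hd : ∀ z, 0 ≤ d z) (hdm : StronglyMeasurable d)
    (ham : StronglyMeasurable a) (hdi : Integrable d (μ.prod ν))
    (hda : Integrable (fun z => d z • a z) (μ.prod ν)) :
    Integrable (fun z => d z • (a z - fiberAverage ν d a z.1)) (μ.prod ν) := by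
  simp only [smul_sub]
  exact hda.sub (integrable_smul_fiberAverage hd hdm ham hdi hda)

theorem integral_smul_smul_sub_fiberAverage [CompleteSpace E] {g : X → ℝ} {C : ℝ}
    (hgm : Measurable g) (hg : ∀ x, ‖g x‖ ≤ C) (hd : ∀ z, 0 ≤ d z)
    (hdm : StronglyMeasurable d) (ham : StronglyMeasurable a) (hdi : Integrable d (μ.prod ν))
    (hda : Integrable (fun z => d z • a z) (μ.prod ν)) :
    ∫ z, g z.1 • d z • (a z - fiberAverage ν d a z.1) ∂(μ.prod ν) = 0 := by
  have hint : Integrable (fun z => g z.1 • d z • (a z - fiberAverage ν d a z.1)) (μ.prod ν) :=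
    (integrable_smul_sub_fiberAverage hd hdm ham hdi hda).bdd_smul C
      (hgm.comp measurable_fst).aestronglyMeasurable (ae_of_all _ fun z => hg z.1)
  rw [integral_prod _ hint]
  refine integral_eq_zero_of_ae ?_
  filter_upwards [hdi.prod_right_ae, hda.prod_right_ae] with x hdx hdax
  rw [integral_smul, fiberAverage,
    integral_smul_sub_weightedAverage (ae_of_all _ fun w => hd _) hdx hdax, smul_zero,
    Pi.zero_apply]

end FiberAverage

section ChangeOfVariables

variable {Ω β E : Type*} [MeasurableSpace Ω] [MeasurableSpace β]
  [NormedAddCommGroup E] [NormedSpace ℝ E]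
  {P : Measure Ω} {μ : Measure β} {T : Ω → β} {d : β → ℝ}

theorem integral_comp_eq_integral_smul_of_map_eq_withDensity (hT : Measurable T)
    (hdm : Measurable d) (hd : ∀ x, 0 ≤ d x)
    (hmap : P.map T = μ.withDensity fun x => ENNReal.ofReal (d x))
    {F : β → E} (hF : StronglyMeasurable F) :
    ∫ ω, F (T ω) ∂P = ∫ x, d x • F x ∂μ := by
  rw [← integral_map hT.aemeasurable hF.aestronglyMeasurable, hmap,
    integral_withDensity_eq_integral_toReal_smul hdm.ennreal_ofReal
      (ae_of_all _ fun _ => ENNReal.ofReal_lt_top)]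
  simp only [ENNReal.toReal_ofReal (hd _)]

theorem integrable_comp_iff_of_map_eq_withDensity (hT : Measurable T)
    (hdm : Measurable d) (hd : ∀ x, 0 ≤ d x)
    (hmap : P.map T = μ.withDensity fun x => ENNReal.ofReal (d x))
    {F : β → E} (hF : StronglyMeasurable F) :
    Integrable (fun ω => F (T ω)) P ↔ Integrable (fun x => d x • F x) μ := by
  rw [← Function.comp_def F T, ← integrable_map_measure hF.aestronglyMeasurable hT.aemeasurable,
    hmap, integrable_withDensity_iff_integrable_smul' hdm.ennreal_ofReal
      (ae_of_all _ fun _ => ENNReal.ofReal_lt_top)]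
  simp only [ENNReal.toReal_ofReal (hd _)]

theorem MeasureTheory.MeasurePreserving.map_symm_withDensity {α : Type*} [MeasurableSpace α]
    {μα : Measure α} {e : α ≃ᵐ β} (he : MeasurePreserving e μα μ) (f : β → ENNReal) :
    (μ.withDensity f).map e.symm = μα.withDensity (f ∘ e) := by
  ext s hs
  rw [Measure.map_apply e.symm.measurable hs, withDensity_apply _ (e.symm.measurable hs),
    withDensity_apply _ hs, ← he.setLIntegral_comp_preimage_emb e.measurableEmbedding,
    Set.preimage_preimage]
  simp

end ChangeOfVariables

theorem integral_smul_eq_of_condExp_ae_eq {Ω E : Type*} {m mΩ : MeasurableSpace Ω}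
    [NormedAddCommGroup E] [NormedSpace ℝ E] [CompleteSpace E]
    {P : Measure Ω} (hm : m ≤ mΩ) [SigmaFinite (P.trim hm)] {R h : Ω → ℝ} {G : Ω → E}
    (hR : Integrable R P) (hG : AEStronglyMeasurable[m] G P)
    (hRG : Integrable (fun ω => R ω • G ω) P) (hce : P[R | m] =ᵐ[P] h) :
    ∫ ω, R ω • G ω ∂P = ∫ ω, h ω • G ω ∂P := by
  rw [← integral_condExp hm]
  refine integral_congr_ae ?_
  filter_upwards [condExp_smul_of_aestronglyMeasurable_right hR hRG hG, hce] with ω h1 h2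
  exact h1.trans (by rw [Pi.smul_apply', h2])

theorem integral_smul_sub_fiberAverage_eq_zero_of_condExp {Ω X W E : Type*}
    {m mΩ : MeasurableSpace Ω} [MeasurableSpace X] [MeasurableSpace W]
    [NormedAddCommGroup E] [NormedSpace ℝ E] [CompleteSpace E]
    {P : Measure Ω} [IsFiniteMeasure P] {μ : Measure X} {ν : Measure W} [SFinite μ] [SFinite ν]
    (hm : m ≤ mΩ) {V : Ω → X} {Z : Ω → W} (hV : Measurable[m] V) (hZ : Measurable[m] Z)
    {d : X × W → ℝ} (hdm : Measurable d) (hd : ∀ z, 0 ≤ d z)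
    (hmap : P.map (fun ω => (V ω, Z ω)) = (μ.prod ν).withDensity fun z => ENNReal.ofReal (d z))
    {R : Ω → ℝ} {π : X → ℝ} {C C' : ℝ} (hRm : Measurable R) (hR : ∀ ω, ‖R ω‖ ≤ C)
    (hπm : Measurable π) (hπ : ∀ x, ‖π x‖ ≤ C') (hce : P[R | m] =ᵐ[P] fun ω => π (V ω))
    {a : X × W → E} (ham : StronglyMeasurable a)
    (hda : Integrable (fun z => d z • a z) (μ.prod ν)) :
    ∫ ω, R ω • (a (V ω, Z ω) - fiberAverage ν d a (V ω)) ∂P = 0 := by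
  set G : X × W → E := fun z => a z - fiberAverage ν d a z.1
  have hVZ : Measurable[m] fun ω => (V ω, Z ω) := hV.prodMk hZ
  have hT : Measurable fun ω => (V ω, Z ω) := hVZ.mono hm le_rfl
  have hGm : StronglyMeasurable G := ham.sub
    ((stronglyMeasurable_fiberAverage hdm.stronglyMeasurable ham).comp_measurable measurable_fst)
  have hdi : Integrable d (μ.prod ν) := by
    simpa only [smul_eq_mul, mul_one] using (integrable_comp_iff_of_map_eq_withDensity hT hdm hd hmap
      (stronglyMeasurable_const (b := (1 : ℝ)))).1 (integrable_const 1)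
  have hGT : Integrable (fun ω => G (V ω, Z ω)) P :=
    (integrable_comp_iff_of_map_eq_withDensity hT hdm hd hmap hGm).2
      (integrable_smul_sub_fiberAverage hd hdm.stronglyMeasurable ham hdi hda)
  have hRi : Integrable R P :=
    (integrable_const C).mono' hRm.aestronglyMeasurable (ae_of_all _ hR)
  calc ∫ ω, R ω • G (V ω, Z ω) ∂P = ∫ ω, π (V ω) • G (V ω, Z ω) ∂P :=
        integral_smul_eq_of_condExp_ae_eq hm hRi (hGm.comp_measurable hVZ).aestronglyMeasurable
          (hGT.bdd_smul C hRm.aestronglyMeasurable (ae_of_all _ hR)) hce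
    _ = ∫ z, d z • π z.1 • G z ∂(μ.prod ν) :=
        integral_comp_eq_integral_smul_of_map_eq_withDensity hT hdm hd hmap
          ((hπm.comp measurable_fst).stronglyMeasurable.smul hGm)
    _ = 0 := by
        simpa only [smul_comm (d _)] using
          integral_smul_smul_sub_fiberAverage hπm hπ hd hdm.stronglyMeasurable ham hdi hda

theorem pseudo_score_mean_zero_general
    {Ω : Type*} [MeasurableSpace Ω] (P : Measure Ω) [IsProbabilityMeasure P]
    {mu mz p' : ℕ}
    (Y : Ω → ℝ) (U : Ω → Fin mu → ℝ) (Z : Ω → Fin mz → ℝ) (R : Ω → ℝ)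
    (hYmeas : Measurable Y) (hUmeas : Measurable U) (hZmeas : Measurable Z)
    (hRmeas : Measurable R)
    (hR01 : ∀ ω, R ω = 0 ∨ R ω = 1)
    (p : ℝ → (Fin mu → ℝ) → (Fin mz → ℝ) → ℝ)
    (f₀ : (Fin mu → ℝ) → (Fin mz → ℝ) → ℝ)
    (hpmeas : Measurable fun x : ℝ × (Fin mu → ℝ) × (Fin mz → ℝ) => p x.1 x.2.1 x.2.2)
    (hf₀meas : Measurable fun x : (Fin mu → ℝ) × (Fin mz → ℝ) => f₀ x.1 x.2)
    (hpnonneg : ∀ y u z, 0 ≤ p y u z) (hf₀nonneg : ∀ u z, 0 ≤ f₀ u z)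
    (hjoint : Measure.map (fun ω => (Y ω, U ω, Z ω)) P =
      (volume : Measure (ℝ × (Fin mu → ℝ) × (Fin mz → ℝ))).withDensity
        (fun x => ENNReal.ofReal (p x.1 x.2.1 x.2.2 * f₀ x.2.1 x.2.2)))
    (π : ℝ → (Fin mu → ℝ) → ℝ)
    (hπmeas : Measurable fun x : ℝ × (Fin mu → ℝ) => π x.1 x.2)
    (hπrange : ∀ y u, π y u ∈ Set.Icc (0 : ℝ) 1)
    (hA2 : MeasureTheory.condExp
        (MeasurableSpace.comap (fun ω => (Y ω, U ω, Z ω)) inferInstance) P R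
      =ᵐ[P] fun ω => π (Y ω) (U ω))
    (a : ℝ → (Fin mu → ℝ) → (Fin mz → ℝ) → Fin p' → ℝ)
    (hameas : Measurable fun x : ℝ × (Fin mu → ℝ) × (Fin mz → ℝ) => a x.1 x.2.1 x.2.2)
    (haint : (∫⁻ x : ℝ × (Fin mu → ℝ) × (Fin mz → ℝ),
      ENNReal.ofReal (‖a x.1 x.2.1 x.2.2‖ * (p x.1 x.2.1 x.2.2 * f₀ x.2.1 x.2.2))) < ⊤)
    (A : ℝ → (Fin mu → ℝ) → Fin p' → ℝ)
    (hA : ∀ y u, A y u =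
      (∫ ζ, p y u ζ * f₀ u ζ)⁻¹ • ∫ ζ, (p y u ζ * f₀ u ζ) • a y u ζ) :
    ∫ ω, R ω • (a (Y ω) (U ω) (Z ω) - A (Y ω) (U ω)) ∂P = 0 := by
  -- regroup `ℝ × U × Z` as `(ℝ × U) × Z`: the conditioning variables `(Y, U)` become one factor
  let e : (ℝ × (Fin mu → ℝ)) × (Fin mz → ℝ) ≃ᵐ ℝ × (Fin mu → ℝ) × (Fin mz → ℝ) :=
    MeasurableEquiv.prodAssoc
  have he : MeasurePreserving e volume volume := measurePreserving_prodAssoc _ _ _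
  let d : ℝ × (Fin mu → ℝ) × (Fin mz → ℝ) → ℝ := fun x => p x.1 x.2.1 x.2.2 * f₀ x.2.1 x.2.2
  have hdm : Measurable d := hpmeas.mul (hf₀meas.comp measurable_snd)
  have hd : ∀ x, 0 ≤ d x := fun x => mul_nonneg (hpnonneg _ _ _) (hf₀nonneg _ _)
  have hT : Measurable fun ω => (Y ω, U ω, Z ω) := hYmeas.prodMk (hUmeas.prodMk hZmeas)
  have hTm : Measurable[MeasurableSpace.comap (fun ω => (Y ω, U ω, Z ω)) inferInstance]
      fun ω => (Y ω, U ω, Z ω) := comap_measurable _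
  have hmap : P.map (fun ω => ((Y ω, U ω), Z ω)) =
      volume.withDensity fun w => ENNReal.ofReal (d (e w)) := by
    rw [show (fun ω => ((Y ω, U ω), Z ω)) = e.symm ∘ fun ω => (Y ω, U ω, Z ω) from rfl,
      ← Measure.map_map e.symm.measurable hT, hjoint, he.map_symm_withDensity]
    rfl
  have hda : Integrable (fun x => d x • a x.1 x.2.1 x.2.2) volume := by
    refine ⟨(hdm.smul hameas).aestronglyMeasurable, (hasFiniteIntegral_iff_norm _).2 ?_⟩
    simpa only [norm_smul, Real.norm_of_nonneg (hd _), mul_comm (d _)] using haint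
  have hR : ∀ ω, ‖R ω‖ ≤ 1 := fun ω => by rcases hR01 ω with h | h <;> simp [h]
  have hπ : ∀ x : ℝ × (Fin mu → ℝ), ‖π x.1 x.2‖ ≤ 1 := fun x => by
    rw [Real.norm_of_nonneg (hπrange x.1 x.2).1]
    exact (hπrange x.1 x.2).2
  simp only [hA]
  exact integral_smul_sub_fiberAverage_eq_zero_of_condExp hT.comap_le
    (hTm.fst.prodMk hTm.snd.fst) hTm.snd.snd (hdm.comp e.measurable) (fun w => hd (e w)) hmap
    hRmeas hR hπmeas hπ hA2 (hameas.comp e.measurable).stronglyMeasurable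
    ((he.integrable_comp_emb e.measurableEmbedding).2 hda)

/-- mean-zero property of the pseudo-score of Zhao--Shao, the
unbiasedness underlying the estimator `β̃` of Section 2.4 of the paper. Suppose
`(U, Z)` has joint density `f₀`, `Y` has conditional density `p(y | u, z)` given
`(U, Z) = (u, z)` (so `(Y, U, Z)` has joint density `p · f₀`), and `R ∈ {0, 1}` follows
Assumption A2: `E[R | Y, U, Z] = π(Y, U)` a.s. with `π` valued in `[0, 1]`. For an
integrable `ℝ^p`-valued `a`, put
`A(y, u) = ∫ a(y, u, ζ) p(y | u, ζ) f₀(u, ζ) dζ / ∫ p(y | u, ζ) f₀(u, ζ) dζ`.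
Then `E[R (a(Y, U, Z) − A(Y, U))] = 0`. -/
theorem pseudo_score_mean_zero
    {Ω : Type*} [MeasurableSpace Ω] (P : Measure Ω) [IsProbabilityMeasure P]
    {mu mz p' : ℕ}
    (Y : Ω → ℝ) (U : Ω → Fin mu → ℝ) (Z : Ω → Fin mz → ℝ) (R : Ω → ℝ)
    (hYmeas : Measurable Y) (hUmeas : Measurable U) (hZmeas : Measurable Z)
    (hRmeas : Measurable R)
    (hR01 : ∀ ω, R ω = 0 ∨ R ω = 1)
    (p : ℝ → (Fin mu → ℝ) → (Fin mz → ℝ) → ℝ)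
    (f₀ : (Fin mu → ℝ) → (Fin mz → ℝ) → ℝ)
    (hpmeas : Measurable fun x : ℝ × (Fin mu → ℝ) × (Fin mz → ℝ) => p x.1 x.2.1 x.2.2)
    (hf₀meas : Measurable fun x : (Fin mu → ℝ) × (Fin mz → ℝ) => f₀ x.1 x.2)
    (hpnonneg : ∀ y u z, 0 ≤ p y u z) (hf₀nonneg : ∀ u z, 0 ≤ f₀ u z)
    (hpcond : ∀ u z, ∫ y, p y u z = 1)
    (hjoint : Measure.map (fun ω => (Y ω, U ω, Z ω)) P =
      (volume : Measure (ℝ × (Fin mu → ℝ) × (Fin mz → ℝ))).withDensity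
        (fun x => ENNReal.ofReal (p x.1 x.2.1 x.2.2 * f₀ x.2.1 x.2.2)))
    (hmarg : Measure.map (fun ω => (U ω, Z ω)) P =
      (volume : Measure ((Fin mu → ℝ) × (Fin mz → ℝ))).withDensity
        (fun x => ENNReal.ofReal (f₀ x.1 x.2)))
    (π : ℝ → (Fin mu → ℝ) → ℝ)
    (hπmeas : Measurable fun x : ℝ × (Fin mu → ℝ) => π x.1 x.2)
    (hπrange : ∀ y u, π y u ∈ Set.Icc (0 : ℝ) 1)
    (hA2 : MeasureTheory.condExp
        (MeasurableSpace.comap (fun ω => (Y ω, U ω, Z ω)) inferInstance) P R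
      =ᵐ[P] fun ω => π (Y ω) (U ω))
    (a : ℝ → (Fin mu → ℝ) → (Fin mz → ℝ) → Fin p' → ℝ)
    (hameas : Measurable fun x : ℝ × (Fin mu → ℝ) × (Fin mz → ℝ) => a x.1 x.2.1 x.2.2)
    (haint : (∫⁻ x : ℝ × (Fin mu → ℝ) × (Fin mz → ℝ),
      ENNReal.ofReal (‖a x.1 x.2.1 x.2.2‖ * (p x.1 x.2.1 x.2.2 * f₀ x.2.1 x.2.2))) < ⊤)
    (A : ℝ → (Fin mu → ℝ) → Fin p' → ℝ)
    (hA : ∀ y u, A y u =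
      (∫ ζ, p y u ζ * f₀ u ζ)⁻¹ • ∫ ζ, (p y u ζ * f₀ u ζ) • a y u ζ) :
    ∫ ω, R ω • (a (Y ω) (U ω) (Z ω) - A (Y ω) (U ω)) ∂P = 0 :=
  pseudo_score_mean_zero_general P Y U Z R hYmeas hUmeas hZmeas hRmeas hR01 p f₀ hpmeas hf₀meas
    hpnonneg hf₀nonneg hjoint π hπmeas hπrange hA2 a hameas haint A hA
end
end

section
/- Let β̂_n, β̃_n : Ω → ℝ^p be measurable estimator sequences such that β̃_n − β̂_n converges in probability to a fixed vector Δ ∈ ℝ^p with Δ ≠ 0, and let Ŵ_n be random p×p matrices converging in probability (entrywise) to a symmetric positive definite matrix W. Then the test statistic T_n = n (β̃_n − β̂_n)ᵀ Ŵ_n^{-1} (β̃_n − β̂_n) diverges to infinity in probability: for every K > 0, P(T_n > K) → 1 as n → ∞. Consequently, the test that rejects when T_n exceeds any fixed critical value has power tending to one. -/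
/-!
The pair `(β̃ₙ - β̂ₙ, Ŵₙ)` converges in probability to `(Δ, W)`, and the quadratic form
`(v, M) ↦ vᵀ M⁻¹ v` is continuous at `(Δ, W)` because `W` is invertible; so the quadratic form of
the pair converges in probability to `Δᵀ W⁻¹ Δ`, which is positive as `W⁻¹` is positive definite.
Once that quadratic form exceeds half its positive limit, the factor `n → ∞` pushes `Tₙ` above
any `K`.
-/

open MeasureTheory Filter Matrix Topology

namespace MeasureTheory

variable {Ω ι E : Type*} [MeasurableSpace Ω] {μ : Measure Ω} {l : Filter ι}

theorem tendsto_measure_nhds_one_of_compl [IsProbabilityMeasure μ] {s : ι → Set Ω}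
    (h : Tendsto (fun i => μ (s i)ᶜ) l (𝓝 0)) : Tendsto (fun i => μ (s i)) l (𝓝 1) := by
  have hlower : ∀ i, 1 - μ (s i)ᶜ ≤ μ (s i) := fun i => by
    rw [tsub_le_iff_right, ← measure_univ (μ := μ), ← Set.union_compl_self (s i)]
    exact measure_union_le _ _
  refine tendsto_of_tendsto_of_tendsto_of_le_of_le ?_ tendsto_const_nhds hlower
    fun _ => prob_le_one
  simpa using ENNReal.Tendsto.sub tendsto_const_nhds h (Or.inl ENNReal.one_ne_top)

namespace TendstoInMeasure

theorem pi {κ : Type*} [Fintype κ] {F : κ → Type*} [∀ k, PseudoEMetricSpace (F k)]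
    {f : ι → Ω → (k : κ) → F k} {g : Ω → (k : κ) → F k}
    (h : ∀ k, TendstoInMeasure μ (fun i ω => f i ω k) l (fun ω => g ω k)) :
    TendstoInMeasure μ f l g := by
  intro ε hε
  have hsub : ∀ i, {ω | ε ≤ edist (f i ω) (g ω)} ⊆ ⋃ k, {ω | ε ≤ edist (f i ω k) (g ω k)} := by
    intro i ω hω
    rw [Set.mem_ofPred_eq, edist_pi_def, Finset.le_sup_iff (bot_lt_iff_ne_bot.2 hε.ne')] at hω
    obtain ⟨k, -, hk⟩ := hω
    exact Set.mem_iUnion.2 ⟨k, hk⟩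
  have hsum : Tendsto (fun i => ∑ k, μ {ω | ε ≤ edist (f i ω k) (g ω k)}) l (𝓝 0) := by
    simpa using tendsto_finsetSum Finset.univ fun k _ => h k ε hε
  exact tendsto_of_tendsto_of_tendsto_of_le_of_le tendsto_const_nhds hsum (fun _ => zero_le)
    fun i => (measure_mono (hsub i)).trans (measure_iUnion_fintype_le μ _)

theorem prodMk {F : Type*} [PseudoEMetricSpace E] [PseudoEMetricSpace F]
    {f : ι → Ω → E} {g : Ω → E} {f' : ι → Ω → F} {g' : Ω → F}
    (hf : TendstoInMeasure μ f l g) (hf' : TendstoInMeasure μ f' l g') :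
    TendstoInMeasure μ (fun i ω => (f i ω, f' i ω)) l (fun ω => (g ω, g' ω)) := by
  intro ε hε
  have hsub : ∀ i, {ω | ε ≤ edist (f i ω, f' i ω) (g ω, g' ω)} ⊆
      {ω | ε ≤ edist (f i ω) (g ω)} ∪ {ω | ε ≤ edist (f' i ω) (g' ω)} :=
    fun i ω hω => by
      simpa only [Set.mem_union, Set.mem_ofPred_eq, Prod.edist_eq, le_max_iff] using hω
  exact tendsto_of_tendsto_of_tendsto_of_le_of_le tendsto_const_nhds
    (by simpa using (hf ε hε).add (hf' ε hε)) (fun _ => zero_le)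
    fun i => (measure_mono (hsub i)).trans (measure_union_le _ _)

variable [PseudoEMetricSpace E] {X : ι → Ω → E} {c : E}

theorem tendsto_measure_notMem (hX : TendstoInMeasure μ X l fun _ => c) {s : Set E}
    (hs : s ∈ 𝓝 c) : Tendsto (fun i => μ {ω | X i ω ∉ s}) l (𝓝 0) := by
  obtain ⟨ε, hε, hball⟩ := EMetric.mem_nhds_iff.1 hs
  refine tendsto_of_tendsto_of_tendsto_of_le_of_le tendsto_const_nhds (hX ε hε)
    (fun _ => zero_le) fun i => measure_mono fun ω hω => ?_
  by_contra hlt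
  exact hω (hball (Metric.mem_eball.2 (not_le.1 hlt)))

theorem comp_continuousAt {F : Type*} [PseudoEMetricSpace F]
    (hX : TendstoInMeasure μ X l fun _ => c) {φ : E → F} (hφ : ContinuousAt φ c) :
    TendstoInMeasure μ (fun i ω => φ (X i ω)) l fun _ => φ c := by
  intro ε hε
  refine tendsto_of_tendsto_of_tendsto_of_le_of_le tendsto_const_nhds
    (hX.tendsto_measure_notMem (hφ (Metric.eball_mem_nhds (φ c) hε))) (fun _ => zero_le)
    fun i => measure_mono fun ω hω hmem => ?_
  exact not_le.2 (Metric.mem_eball.1 hmem) hω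

theorem tendsto_measure_lt_mul [IsProbabilityMeasure μ] {Y : ι → Ω → ℝ} {y : ℝ}
    (hY : TendstoInMeasure μ Y l fun _ => y) (hy : 0 < y) {a : ι → ℝ}
    (ha : Tendsto a l atTop) (K : ℝ) :
    Tendsto (fun i => μ {ω | K < a i * Y i ω}) l (𝓝 1) := by
  refine tendsto_measure_nhds_one_of_compl <| tendsto_of_tendsto_of_tendsto_of_le_of_le'
    tendsto_const_nhds (hY.tendsto_measure_notMem (Ioi_mem_nhds (half_lt_self hy)))
    (Eventually.of_forall fun _ => zero_le) ?_
  filter_upwards [ha.eventually_gt_atTop 0, ha.eventually_gt_atTop (K / (y / 2))]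
    with i hapos haK
  refine measure_mono fun ω hω hmem => hω ?_
  calc K < a i * (y / 2) := by rwa [div_lt_iff₀ (half_pos hy)] at haK
    _ ≤ a i * Y i ω := by gcongr; exact hmem.le

end TendstoInMeasure

end MeasureTheory

theorem Matrix.continuousAt_dotProduct_inv_mulVec {n R : Type*} [Fintype n] [DecidableEq n]
    [Field R] [TopologicalSpace R] [IsTopologicalRing R] [ContinuousInv₀ R]
    (v : n → R) {M : Matrix n n R} (hM : M.det ≠ 0) :
    ContinuousAt (fun x : (n → R) × Matrix n n R => x.1 ⬝ᵥ x.2⁻¹ *ᵥ x.1) (v, M) := by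
  have hinv : ContinuousAt Inv.inv M := continuousAt_matrix_inv M <| by
    rw [Ring.inverse_eq_inv']
    exact continuousAt_inv₀ hM
  have hquad : Continuous fun x : (n → R) × Matrix n n R => x.1 ⬝ᵥ x.2 *ᵥ x.1 :=
    continuous_fst.dotProduct (continuous_snd.matrix_mulVec continuous_fst)
  exact hquad.continuousAt.comp (f := fun x : (n → R) × Matrix n n R => (x.1, x.2⁻¹))
    (continuousAt_fst.prodMk (hinv.comp continuousAt_snd))

theorem test_statistic_diverges_under_alternative_general
    {Ω : Type*} [MeasurableSpace Ω] (P : Measure Ω) [IsProbabilityMeasure P]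
    {p : ℕ}
    (βhat βtilde : ℕ → Ω → Fin p → ℝ)
    (Δ : Fin p → ℝ) (hΔ : Δ ≠ 0)
    (hconv : TendstoInMeasure P (fun (n : ℕ) ω => βtilde n ω - βhat n ω) atTop
      (fun _ => Δ))
    (W : Matrix (Fin p) (Fin p) ℝ) (hW : W.PosDef)
    (What : ℕ → Ω → Matrix (Fin p) (Fin p) ℝ)
    (hWhatconv : ∀ i j,
      TendstoInMeasure P (fun (n : ℕ) ω => What n ω i j) atTop (fun _ => W i j)) :
    ∀ K : ℝ, 0 < K →
      Tendsto (fun n : ℕ =>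
          P {ω | K < (n : ℝ) *
            ((βtilde n ω - βhat n ω) ⬝ᵥ (What n ω)⁻¹.mulVec (βtilde n ω - βhat n ω))})
        atTop (nhds 1) := by
  intro K _
  -- matrices carry no metric instance; `of.symm` gives them the sup metric of `Fin p → Fin p → ℝ`
  have hpair : TendstoInMeasure P (fun n ω => (βtilde n ω - βhat n ω, of.symm (What n ω))) atTop
      fun _ => (Δ, of.symm W) :=
    hconv.prodMk (TendstoInMeasure.pi fun i => TendstoInMeasure.pi fun j => hWhatconv i j)
  have hquad := continuousAt_dotProduct_inv_mulVec Δ hW.det_pos.ne'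
  have hlimit : 0 < Δ ⬝ᵥ W⁻¹ *ᵥ Δ := by
    simpa only [star_trivial] using hW.inv.dotProduct_mulVec_pos hΔ
  exact (hpair.comp_continuousAt (φ := fun x => x.1 ⬝ᵥ (of x.2)⁻¹ *ᵥ x.1) hquad)
    |>.tendsto_measure_lt_mul hlimit tendsto_natCast_atTop_atTop K

/-- consistency of the test under a fixed alternative, formalizing
the remark after Theorem 4 of the paper. If `β̃ₙ − β̂ₙ` converges in probability to a
fixed nonzero vector `Δ`, and `Ŵₙ` converges entrywise in probability to a symmetric
positive definite matrix `W`, then `Tₙ = n (β̃ₙ − β̂ₙ)ᵀ Ŵₙ⁻¹ (β̃ₙ − β̂ₙ)` diverges to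
infinity in probability: for every `K > 0`, `P(Tₙ > K) → 1`. (Hence the power of the
test at any fixed critical value tends to one; the Lean matrix inverse is `0` on
singular matrices, as in the stated convention.) -/
theorem test_statistic_diverges_under_alternative
    {Ω : Type*} [MeasurableSpace Ω] (P : Measure Ω) [IsProbabilityMeasure P]
    {p : ℕ}
    (βhat βtilde : ℕ → Ω → Fin p → ℝ)
    (hβhatmeas : ∀ n, Measurable (βhat n))
    (hβtildemeas : ∀ n, Measurable (βtilde n))
    (Δ : Fin p → ℝ) (hΔ : Δ ≠ 0)
    (hconv : TendstoInMeasure P (fun (n : ℕ) ω => βtilde n ω - βhat n ω) atTop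
      (fun _ => Δ))
    (W : Matrix (Fin p) (Fin p) ℝ) (hW : W.PosDef)
    (What : ℕ → Ω → Matrix (Fin p) (Fin p) ℝ)
    (hWhatmeas : ∀ n i j, Measurable (fun ω => What n ω i j))
    (hWhatconv : ∀ i j,
      TendstoInMeasure P (fun (n : ℕ) ω => What n ω i j) atTop (fun _ => W i j)) :
    ∀ K : ℝ, 0 < K →
      Tendsto (fun n : ℕ =>
          P {ω | K < (n : ℝ) *
            ((βtilde n ω - βhat n ω) ⬝ᵥ (What n ω)⁻¹.mulVec (βtilde n ω - βhat n ω))})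
        atTop (nhds 1) :=
  test_statistic_diverges_under_alternative_general P βhat βtilde Δ hΔ hconv W hW What hWhatconv
end
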